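/- For every m ≥ 3, the 3-strand configuration graph of Θ_m is connected (i.e., the configuration complex Conf_3(Θ_m) is connected). -/

import Mathlib

/-- The subdivided generalized theta graph `Θ_m`: vertices `inl i` (the numbered
vertices `1,…,m`) and `inr 0 = a`, `inr 1 = b`; edges exactly `inl i — inr t`. -/
def theta (m : ℕ) : SimpleGraph (Fin m ⊕ Fin 2) where
  Adj x y := x.isLeft ≠ y.isLeft
  symm := ⟨fun _ _ h => h.symm⟩
  loopless := ⟨fun _ h => h rfl⟩

instance (m : ℕ) : DecidableRel (theta m).Adj :=
  fun x y => inferInstanceAs (Decidable (x.isLeft ≠ y.isLeft))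

/-- The 3-strand configuration graph of a graph `G`: vertices are 3-element
subsets of the vertex set; `S` is adjacent to `T` iff `|S ∩ T| = 2` and the
unique vertex of `S \ T` is adjacent in `G` to the unique vertex of `T \ S`. -/
def conf3 {V : Type*} [DecidableEq V] (G : SimpleGraph V) :
    SimpleGraph {S : Finset V // S.card = 3} where
  Adj S T := (S.1 ∩ T.1).card = 2 ∧
    ∃ u v, u ∈ S.1 \ T.1 ∧ v ∈ T.1 \ S.1 ∧ G.Adj u v
  symm := by
    refine ⟨?_⟩
    rintro S T ⟨hc, u, v, hu, hv, ha⟩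
    exact ⟨by rwa [Finset.inter_comm], v, u, hv, hu, ha.symm⟩
  loopless := by
    refine ⟨?_⟩
    rintro S ⟨hc, u, v, hu, _⟩
    simp at hu

instance {V : Type*} [DecidableEq V] [Fintype V] (G : SimpleGraph V)
    [DecidableRel G.Adj] : DecidableRel (conf3 G).Adj :=
  fun _ _ => inferInstanceAs (Decidable (_ ∧ _))

/-!
`Θ_m` is the complete bipartite graph `K_{m,2}`. A token sitting on `a` or `b` can always step
to one of the `m ≥ 3` numbered vertices, since at most two of them are occupied; so every
configuration reaches one avoiding `a` and `b`. Two such configurations are joined by moving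
tokens one at a time through the free hub `a`, which is adjacent to every numbered vertex.
-/

section Conf3

variable {V : Type*} [DecidableEq V] {G : SimpleGraph V}

lemma card_insert_erase_of_mem_of_notMem {S : Finset V} {u v : V} (hu : u ∈ S) (hv : v ∉ S) :
    (insert v (S.erase u)).card = S.card := by
  rw [Finset.card_insert_of_notMem (fun h => hv (Finset.mem_of_mem_erase h)),
    Finset.card_erase_add_one hu]

lemma conf3_adj_of_eq_insert_erase {S T : {S : Finset V // S.card = 3}} {u v : V}
    (hu : u ∈ S.1) (hv : v ∉ S.1) (hT : T.1 = insert v (S.1.erase u)) (huv : G.Adj u v) :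
    (conf3 G).Adj S T := by
  refine ⟨?_, u, v, ?_, ?_, huv⟩
  · rw [hT, Finset.inter_insert_of_notMem hv,
      Finset.inter_eq_right.mpr (Finset.erase_subset u S.1), Finset.card_erase_of_mem hu, S.2]
  · simp [hT, hu, huv.ne]
  · simp [hT, hv]

lemma conf3_reachable_of_eq_insert_erase {S T : {S : Finset V // S.card = 3}} {u v r : V}
    (hu : u ∈ S.1) (hv : v ∉ S.1) (hr : r ∉ S.1) (hT : T.1 = insert v (S.1.erase u))
    (hur : G.Adj u r) (hrv : G.Adj r v) :
    (conf3 G).Reachable S T := by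
  have hrS : r ∉ S.1.erase u := fun h => hr (Finset.mem_of_mem_erase h)
  let R : {S : Finset V // S.card = 3} :=
    ⟨insert r (S.1.erase u), (card_insert_erase_of_mem_of_notMem hu hr).trans S.2⟩
  have hvR : v ∉ R.1 := by
    simp only [R, Finset.mem_insert, Finset.mem_erase, not_or]
    exact ⟨hrv.ne.symm, fun h => hv h.2⟩
  have hRT : T.1 = insert v (R.1.erase r) := by rw [hT, Finset.erase_insert hrS]
  exact (conf3_adj_of_eq_insert_erase hu hr rfl hur).reachable.trans
    (conf3_adj_of_eq_insert_erase (Finset.mem_insert_self r _) hvR hRT hrv).reachable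

lemma conf3_reachable_of_forall_adj {r : V} {S T : {S : Finset V // S.card = 3}}
    (hS : ∀ x ∈ S.1, G.Adj r x) (hT : ∀ x ∈ T.1, G.Adj r x) : (conf3 G).Reachable S T := by
  induction h : (S.1 \ T.1).card using Nat.strong_induction_on generalizing S with
  | _ n ih =>
    obtain hST | ⟨u, hu⟩ := (S.1 \ T.1).eq_empty_or_nonempty
    · have hST : S = T := Subtype.ext <| Finset.eq_of_subset_of_card_le
        (Finset.sdiff_eq_empty_iff_subset.mp hST) (by rw [S.2, T.2])
      rw [hST]
    obtain ⟨v, hv⟩ : (T.1 \ S.1).Nonempty := by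
      rw [← Finset.card_pos, Finset.card_sdiff_comm (T.2.trans S.2.symm)]
      exact Finset.card_pos.mpr ⟨u, hu⟩
    rw [Finset.mem_sdiff] at hu hv
    let S' : {S : Finset V // S.card = 3} :=
      ⟨insert v (S.1.erase u), (card_insert_erase_of_mem_of_notMem hu.1 hv.2).trans S.2⟩
    have hSS' : (conf3 G).Reachable S S' := conf3_reachable_of_eq_insert_erase hu.1 hv.2
      (fun hr => (hS r hr).ne rfl) rfl (hS u hu.1).symm (hT v hv.1)
    have hS' : ∀ x ∈ S'.1, G.Adj r x := by
      simp only [S', Finset.forall_mem_insert]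
      exact ⟨hT v hv.1, fun x hx => hS x (Finset.mem_of_mem_erase hx)⟩
    have hlt : (S'.1 \ T.1).card < n := by
      rw [Finset.insert_sdiff_of_mem _ hv.1, Finset.erase_sdiff_comm, ← h]
      exact Finset.card_erase_lt_of_mem (Finset.mem_sdiff.mpr hu)
    exact hSS'.trans (ih _ hlt hS' rfl)

end Conf3

section Theta

variable {m : ℕ}

lemma theta_adj_inr {i : Fin 2} {x : Fin m ⊕ Fin 2} (hx : x.isLeft) :
    (theta m).Adj (.inr i) x := by
  simp [theta, hx]

lemma theta_exists_isLeft_notMem (hm : 3 ≤ m) {S : Finset (Fin m ⊕ Fin 2)} (hS : S.card = 3)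
    {x : Fin m ⊕ Fin 2} (hxS : x ∈ S) (hx : x.isRight) : ∃ v, v.isLeft ∧ v ∉ S := by
  obtain ⟨v, hv, hvS⟩ := Finset.exists_mem_notMem_of_card_lt_card
    (s := S.erase x) (t := Finset.univ.map .inl) (by
      rw [Finset.card_erase_of_mem hxS, hS, Finset.card_map, Finset.card_univ, Fintype.card_fin]
      omega)
  obtain ⟨i, -, rfl⟩ := Finset.mem_map.mp hv
  refine ⟨.inl i, rfl, fun h => hvS (Finset.mem_erase.mpr ⟨?_, h⟩)⟩
  rintro rfl
  simp at hx

lemma conf3_theta_exists_reachable_forall_isLeft (hm : 3 ≤ m)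
    (S : {S : Finset (Fin m ⊕ Fin 2) // S.card = 3}) :
    ∃ T, (∀ x ∈ T.1, x.isLeft) ∧ (conf3 (theta m)).Reachable S T := by
  induction h : (S.1.filter (·.isRight)).card generalizing S with
  | zero =>
    refine ⟨S, fun x hx => ?_, .rfl⟩
    rw [Finset.card_eq_zero, Finset.filter_eq_empty_iff] at h
    simpa using h hx
  | succ n ih =>
    obtain ⟨x, hx⟩ : (S.1.filter (·.isRight)).Nonempty := by
      rw [← Finset.card_pos, h]; omega
    rw [Finset.mem_filter] at hx
    obtain ⟨v, hvl, hvS⟩ := theta_exists_isLeft_notMem hm S.2 hx.1 hx.2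
    let S' : {S : Finset (Fin m ⊕ Fin 2) // S.card = 3} :=
      ⟨insert v (S.1.erase x), (card_insert_erase_of_mem_of_notMem hx.1 hvS).trans S.2⟩
    have hSS' : (conf3 (theta m)).Adj S S' :=
      conf3_adj_of_eq_insert_erase hx.1 hvS rfl (by simp [theta, hvl, hx.2])
    have hn : (S'.1.filter (·.isRight)).card = n := by
      rw [Finset.filter_insert, if_neg (by simpa using hvl), Finset.filter_erase,
        Finset.card_erase_of_mem (Finset.mem_filter.mpr hx), h, Nat.add_sub_cancel]
    obtain ⟨T, hT, hS'T⟩ := ih S' hn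
    exact ⟨T, hT, hSS'.reachable.trans hS'T⟩

end Theta

/-- For `m ≥ 3`, the 3-strand configuration graph of `Θ_m` is connected. -/
theorem conf3_theta_connected (m : ℕ) (hm : 3 ≤ m) : (conf3 (theta m)).Connected := by
  have : Nonempty {S : Finset (Fin m ⊕ Fin 2) // S.card = 3} := by
    have hcard : 3 ≤ (Finset.univ : Finset (Fin m ⊕ Fin 2)).card := by
      rw [Finset.card_univ, Fintype.card_sum, Fintype.card_fin, Fintype.card_fin]; omega
    obtain ⟨S, -, hS⟩ := Finset.exists_subset_card_eq hcard
    exact ⟨⟨S, hS⟩⟩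
  refine ⟨fun S T => ?_⟩
  obtain ⟨S', hS', hSS'⟩ := conf3_theta_exists_reachable_forall_isLeft hm S
  obtain ⟨T', hT', hTT'⟩ := conf3_theta_exists_reachable_forall_isLeft hm T
  have hS'T' : (conf3 (theta m)).Reachable S' T' := conf3_reachable_of_forall_adj (r := .inr 0)
    (fun x hx => theta_adj_inr (hS' x hx)) (fun x hx => theta_adj_inr (hT' x hx))
  exact hSS'.trans (hS'T'.trans hTT'.symm)
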